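/- arXiv:1707.09697 — 2 statements merged into one kernel-verified Lean document; each statement's English description precedes it below -/
import Mathlib

section
/- Let d = 2, a > 0, ν ≥ 2, and let A = (a_{kl}) be a symmetric 2×2 positive semi-definite matrix with a_{11} > 0, a_{22} > 0 and inf{uᵀAu/‖u‖² : u in the closed nonnegative orthant, u≠0} > 0. Then the function m̃(h_1,h_2) = (ν!)^{-2} κ_ν² (a_{11}h_1^{2ν} + 2a_{12}h_1^ν h_2^ν + a_{22}h_2^{2ν}) + a/(n h_1 h_2) with a = c·b·‖K‖₂² is uniquely minimized over (h_1,h_2) ∈ ℝ_+² by h_{opt,1} = ( c(ν!)² b ‖K‖₂² a_{22}^{(ν+1)/(2ν)} / ( 2nν κ_ν² a_{11}^{(ν+1)/(2ν)} ( a_{11}^{1/2} a_{22}^{1/2} + a_{12} ) ) )^{1/(2ν+2)} and h_{opt,2} = (a_{11}/a_{22})^{1/(2ν)} h_{opt,1}. -/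
/-!
Put `C = κ_ν² / (ν!)²`, `B = c b ‖K‖₂² / n`, `s₁ = √a₁₁`, `s₂ = √a₂₂` and `S = s₁ s₂ + a₁₂`.
Since `a₁₁x² + 2a₁₂xy + a₂₂y² = (s₁x - s₂y)² + 2Sxy`, with `x = h₁^ν`, `y = h₂^ν` the risk is
`C (s₁h₁^ν - s₂h₂^ν)² + (2CS p^ν + B / p)` with `p = h₁h₂`, and coercivity on the orthant,
evaluated at `(s₂, s₁)`, gives `S > 0`. By Bernoulli's inequality the second summand is
uniquely minimized at the `p` with `2CSν p^(ν+1) = B`, the first vanishes exactly when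
`s₁h₁^ν = s₂h₂^ν`, and these two equations have the explicit `h_opt` as their only
solution in the open quadrant.
-/

open Real

lemma isMinOn_of_forall_ne_lt {α β : Type*} [LinearOrder β] {f : α → β} {s : Set α} {x : α}
    (hlt : ∀ y ∈ s, y ≠ x → f x < f y) : IsMinOn f s x := fun y hy => by
  rcases eq_or_ne y x with rfl | hne
  · exact le_rfl
  · exact (hlt y hy hne).le

lemma eq_of_isMinOn_of_forall_ne_lt {α β : Type*} [LinearOrder β] {f : α → β} {s : Set α}
    {x y : α} (hx : x ∈ s) (hlt : ∀ y ∈ s, y ≠ x → f x < f y) (hy : y ∈ s)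
    (hmin : IsMinOn f s y) : y = x := by
  by_contra hne
  exact (hmin hx).not_gt (hlt y hy hne)

lemma rpow_one_div_two_mul_pow {x : ℝ} (hx : 0 ≤ x) {ν : ℕ} (hν : ν ≠ 0) :
    (x ^ ((1 : ℝ) / (2 * ν))) ^ ν = √x := by
  rw [← rpow_mul_natCast hx, sqrt_eq_rpow]
  congr 1
  field_simp

lemma rpow_one_div_two_mul_pow_succ {x : ℝ} (hx : 0 ≤ x) (ν : ℕ) :
    (x ^ ((1 : ℝ) / (2 * ν))) ^ (ν + 1) = x ^ (((ν : ℝ) + 1) / (2 * ν)) := by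
  rw [← rpow_mul_natCast hx]
  congr 1
  push_cast
  ring

lemma rpow_one_div_two_mul_add_two_pow {x : ℝ} (hx : 0 ≤ x) (ν : ℕ) :
    (x ^ ((1 : ℝ) / (2 * ν + 2))) ^ (2 * ν + 2) = x := by
  rw [← rpow_mul_natCast hx]
  convert rpow_one x using 2
  push_cast
  field_simp

lemma one_add_mul_sub_lt_pow {t : ℝ} (ht : 0 ≤ t) (ht1 : t ≠ 1) {m : ℕ} (hm : 2 ≤ m) :
    1 + m * (t - 1) < t ^ m := by
  have h := one_add_mul_self_lt_rpow_one_add (s := t - 1) (by linarith) (sub_ne_zero.2 ht1)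
    (p := m) (by exact_mod_cast hm)
  simpa [rpow_natCast] using h

lemma mul_pow_add_div_lt {ν : ℕ} (hν : ν ≠ 0) {A B p q : ℝ} (hA : 0 < A) (hp : 0 < p)
    (hq : 0 < q) (hpq : p ≠ q) (hB : A * ν * q ^ (ν + 1) = B) :
    A * q ^ ν + B / q < A * p ^ ν + B / p := by
  obtain ⟨t, ht, rfl⟩ : ∃ t, 0 < t ∧ p = t * q := ⟨p / q, div_pos hp hq, by field_simp⟩
  have ht1 : t ≠ 1 := by rintro rfl; simp at hpq
  have hbern := one_add_mul_sub_lt_pow ht.le ht1 (m := ν + 1) (by omega)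
  have hdiff : A * (t * q) ^ ν + B / (t * q) - (A * q ^ ν + B / q)
      = A * q ^ ν / t * (t ^ (ν + 1) - (1 + ((ν + 1 : ℕ) : ℝ) * (t - 1))) := by
    subst hB
    field_simp
    push_cast
    ring
  rw [← sub_pos, hdiff]
  exact mul_pos (by positivity) (by linarith)

lemma quadForm_eq_sq_add {a11 a22 : ℝ} (ha11 : 0 ≤ a11) (ha22 : 0 ≤ a22) (a12 x y : ℝ) :
    a11 * x ^ 2 + 2 * a12 * x * y + a22 * y ^ 2
      = (√a11 * x - √a22 * y) ^ 2 + 2 * (√a11 * √a22 + a12) * x * y := by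
  linear_combination (-x ^ 2) * sq_sqrt ha11 + (-y ^ 2) * sq_sqrt ha22

lemma sqrt_mul_sqrt_add_pos {a11 a12 a22 : ℝ} (ha11 : 0 < a11) (ha22 : 0 < a22)
    (hcoer : ∃ c₀ > (0 : ℝ), ∀ u1 u2 : ℝ, 0 ≤ u1 → 0 ≤ u2 →
      c₀ * (u1 ^ 2 + u2 ^ 2) ≤ a11 * u1 ^ 2 + 2 * a12 * u1 * u2 + a22 * u2 ^ 2) :
    0 < √a11 * √a22 + a12 := by
  obtain ⟨c₀, hc₀, hco⟩ := hcoer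
  have h := hco √a22 √a11 (sqrt_nonneg _) (sqrt_nonneg _)
  rw [quadForm_eq_sq_add ha11.le ha22.le] at h
  have hpos : 0 < √a11 * √a22 := by positivity
  have : 0 < c₀ * (√a22 ^ 2 + √a11 ^ 2) := by positivity
  nlinarith

lemma eq_and_eq_of_mul_pow_eq {ν : ℕ} (hν : ν ≠ 0) {α β u v x y : ℝ} (hα : 0 < α) (hβ : 0 < β)
    (hu : 0 < u) (hv : 0 < v) (hx : 0 < x) (hy : 0 < y)
    (huv : α * u ^ ν = β * v ^ ν) (hxy : α * x ^ ν = β * y ^ ν) (hprod : u * v = x * y) :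
    u = x ∧ v = y := by
  have hpow : (u * y) ^ ν = (v * x) ^ ν := by
    apply mul_left_cancel₀ (mul_pos hα hβ).ne'
    linear_combination (β * y ^ ν) * huv - (β * v ^ ν) * hxy
  have hratio : u * y = v * x :=
    (pow_left_strictMonoOn₀ hν).injOn (mul_pos hu hy).le (mul_pos hv hx).le hpow
  have hux : u ^ 2 = x ^ 2 := by
    apply mul_left_cancel₀ hy.ne'
    linear_combination u * hratio + x * hprod
  obtain rfl : u = x := (pow_left_strictMonoOn₀ two_ne_zero).injOn hu.le hx.le hux
  exact ⟨rfl, mul_left_cancel₀ hu.ne' hprod⟩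

noncomputable def asymptoticRisk (ν : ℕ) (C a11 a12 a22 B : ℝ) (h : ℝ × ℝ) : ℝ :=
  C * (a11 * h.1 ^ (2 * ν) + 2 * a12 * h.1 ^ ν * h.2 ^ ν + a22 * h.2 ^ (2 * ν)) + B / (h.1 * h.2)

section asymptoticRisk

variable {ν : ℕ} {C a11 a12 a22 B : ℝ}

lemma asymptoticRisk_eq (ha11 : 0 ≤ a11) (ha22 : 0 ≤ a22) (h : ℝ × ℝ) :
    asymptoticRisk ν C a11 a12 a22 B h
      = C * (√a11 * h.1 ^ ν - √a22 * h.2 ^ ν) ^ 2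
        + (2 * C * (√a11 * √a22 + a12) * (h.1 * h.2) ^ ν + B / (h.1 * h.2)) := by
  have := quadForm_eq_sq_add ha11 ha22 a12 (h.1 ^ ν) (h.2 ^ ν)
  unfold asymptoticRisk
  linear_combination C * this

variable (hν : ν ≠ 0) (hC : 0 < C) (ha11 : 0 < a11) (ha22 : 0 < a22)
  (hS : 0 < √a11 * √a22 + a12) {x : ℝ × ℝ} (hx : x ∈ {h : ℝ × ℝ | 0 < h.1 ∧ 0 < h.2})
  (hbal : √a11 * x.1 ^ ν = √a22 * x.2 ^ ν)
  (hstat : 2 * C * (√a11 * √a22 + a12) * ν * (x.1 * x.2) ^ (ν + 1) = B)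
include hν hC ha11 ha22 hS hx hbal hstat

theorem asymptoticRisk_lt {y : ℝ × ℝ} (hy : y ∈ {h : ℝ × ℝ | 0 < h.1 ∧ 0 < h.2}) (hne : y ≠ x) :
    asymptoticRisk ν C a11 a12 a22 B x < asymptoticRisk ν C a11 a12 a22 B y := by
  obtain ⟨hy1, hy2⟩ := hy
  rw [asymptoticRisk_eq ha11.le ha22.le, asymptoticRisk_eq ha11.le ha22.le, hbal, sub_self]
  by_cases hprod : y.1 * y.2 = x.1 * x.2
  · have hgap : √a11 * y.1 ^ ν - √a22 * y.2 ^ ν ≠ 0 := fun hgap => hne <| Prod.ext_iff.2 <|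
      eq_and_eq_of_mul_pow_eq hν (sqrt_pos.2 ha11) (sqrt_pos.2 ha22) hy1 hy2 hx.1 hx.2
        (sub_eq_zero.1 hgap) hbal hprod
    rw [hprod]
    have : 0 < C * (√a11 * y.1 ^ ν - √a22 * y.2 ^ ν) ^ 2 := by positivity
    linarith
  · have := mul_pow_add_div_lt hν (by positivity) (mul_pos hy1 hy2) (mul_pos hx.1 hx.2) hprod
      hstat
    have : 0 ≤ C * (√a11 * y.1 ^ ν - √a22 * y.2 ^ ν) ^ 2 := by positivity
    linarith

theorem isMinOn_asymptoticRisk_and_unique :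
    IsMinOn (asymptoticRisk ν C a11 a12 a22 B) {h : ℝ × ℝ | 0 < h.1 ∧ 0 < h.2} x ∧
      ∀ y ∈ {h : ℝ × ℝ | 0 < h.1 ∧ 0 < h.2},
        IsMinOn (asymptoticRisk ν C a11 a12 a22 B) {h : ℝ × ℝ | 0 < h.1 ∧ 0 < h.2} y → y = x :=
  have hlt := fun y => asymptoticRisk_lt hν hC ha11 ha22 hS hx hbal hstat (y := y)
  ⟨isMinOn_of_forall_ne_lt hlt, fun _ hy => eq_of_isMinOn_of_forall_ne_lt hx hlt hy⟩

end asymptoticRisk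

theorem statement8_general
    (ν : ℕ) (hν : 2 ≤ ν) (n : ℕ) (hn : 1 ≤ n)
    (c b K2 κν : ℝ) (hc : 0 < c) (hb : 0 < b) (hK2 : 0 < K2) (hκν : 0 < κν)
    (a11 a12 a22 : ℝ) (ha11 : 0 < a11) (ha22 : 0 < a22)
    (hcoer : ∃ c₀ > (0 : ℝ), ∀ u1 u2 : ℝ, 0 ≤ u1 → 0 ≤ u2 →
      c₀ * (u1 ^ 2 + u2 ^ 2) ≤ a11 * u1 ^ 2 + 2 * a12 * u1 * u2 + a22 * u2 ^ 2) :
    IsMinOn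
      (fun h : ℝ × ℝ =>
        ((Nat.factorial ν : ℝ) ^ 2)⁻¹ * κν ^ 2 *
            (a11 * h.1 ^ (2 * ν) + 2 * a12 * h.1 ^ ν * h.2 ^ ν + a22 * h.2 ^ (2 * ν)) +
          c * b * K2 / ((n : ℝ) * h.1 * h.2))
      {h : ℝ × ℝ | 0 < h.1 ∧ 0 < h.2}
      ((c * (Nat.factorial ν : ℝ) ^ 2 * b * K2 * a22 ^ (((ν : ℝ) + 1) / (2 * ν)) /
          (2 * n * ν * κν ^ 2 * a11 ^ (((ν : ℝ) + 1) / (2 * ν)) *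
            (a11 ^ ((1 : ℝ) / 2) * a22 ^ ((1 : ℝ) / 2) + a12))) ^ ((1 : ℝ) / (2 * ν + 2)),
        (a11 / a22) ^ ((1 : ℝ) / (2 * ν)) *
          (c * (Nat.factorial ν : ℝ) ^ 2 * b * K2 * a22 ^ (((ν : ℝ) + 1) / (2 * ν)) /
            (2 * n * ν * κν ^ 2 * a11 ^ (((ν : ℝ) + 1) / (2 * ν)) *
              (a11 ^ ((1 : ℝ) / 2) * a22 ^ ((1 : ℝ) / 2) + a12))) ^ ((1 : ℝ) / (2 * ν + 2))) ∧
    ∀ h ∈ {h : ℝ × ℝ | 0 < h.1 ∧ 0 < h.2},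
      IsMinOn
        (fun h : ℝ × ℝ =>
          ((Nat.factorial ν : ℝ) ^ 2)⁻¹ * κν ^ 2 *
              (a11 * h.1 ^ (2 * ν) + 2 * a12 * h.1 ^ ν * h.2 ^ ν + a22 * h.2 ^ (2 * ν)) +
            c * b * K2 / ((n : ℝ) * h.1 * h.2))
        {h : ℝ × ℝ | 0 < h.1 ∧ 0 < h.2} h →
      h = ((c * (Nat.factorial ν : ℝ) ^ 2 * b * K2 * a22 ^ (((ν : ℝ) + 1) / (2 * ν)) /
          (2 * n * ν * κν ^ 2 * a11 ^ (((ν : ℝ) + 1) / (2 * ν)) *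
            (a11 ^ ((1 : ℝ) / 2) * a22 ^ ((1 : ℝ) / 2) + a12))) ^ ((1 : ℝ) / (2 * ν + 2)),
        (a11 / a22) ^ ((1 : ℝ) / (2 * ν)) *
          (c * (Nat.factorial ν : ℝ) ^ 2 * b * K2 * a22 ^ (((ν : ℝ) + 1) / (2 * ν)) /
            (2 * n * ν * κν ^ 2 * a11 ^ (((ν : ℝ) + 1) / (2 * ν)) *
              (a11 ^ ((1 : ℝ) / 2) * a22 ^ ((1 : ℝ) / 2) + a12))) ^ ((1 : ℝ) / (2 * ν + 2))) := by
  have hν0 : ν ≠ 0 := by omega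
  have hn' : (0 : ℝ) < n := by exact_mod_cast hn
  simp only [← sqrt_eq_rpow]
  set C := ((Nat.factorial ν : ℝ) ^ 2)⁻¹ * κν ^ 2 with hC
  set B := c * b * K2 / n with hB
  set E := c * (Nat.factorial ν : ℝ) ^ 2 * b * K2 * a22 ^ (((ν : ℝ) + 1) / (2 * ν)) /
    (2 * n * ν * κν ^ 2 * a11 ^ (((ν : ℝ) + 1) / (2 * ν)) * (√a11 * √a22 + a12)) with hE
  set r := (a11 / a22) ^ ((1 : ℝ) / (2 * ν)) with hr
  set X := E ^ ((1 : ℝ) / (2 * ν + 2)) with hX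
  have hS := sqrt_mul_sqrt_add_pos ha11 ha22 hcoer
  have hbal : √a11 * X ^ ν = √a22 * (r * X) ^ ν := by
    rw [mul_pow, hr, rpow_one_div_two_mul_pow (div_pos ha11 ha22).le hν0, sqrt_div' _ ha22.le]
    field_simp
  have hstat : 2 * C * (√a11 * √a22 + a12) * ν * (X * (r * X)) ^ (ν + 1) = B := by
    rw [show (X * (r * X)) ^ (ν + 1) = r ^ (ν + 1) * X ^ (2 * ν + 2) by ring, hr, hX,
      rpow_one_div_two_mul_pow_succ (div_pos ha11 ha22).le, div_rpow ha11.le ha22.le,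
      rpow_one_div_two_mul_add_two_pow (by positivity), hE, hC, hB]
    field_simp
  have hrisk : (fun h : ℝ × ℝ => C * (a11 * h.1 ^ (2 * ν) + 2 * a12 * h.1 ^ ν * h.2 ^ ν
      + a22 * h.2 ^ (2 * ν)) + c * b * K2 / ((n : ℝ) * h.1 * h.2))
      = asymptoticRisk ν C a11 a12 a22 B := by
    funext h
    simp only [asymptoticRisk, hB]
    ring
  rw [hrisk]
  exact isMinOn_asymptoticRisk_and_unique hν0 (by positivity) ha11 ha22 hS
    ⟨by positivity, by positivity⟩ hbal hstat

/-- Remark after Theorem 3.3, the case `d = 2`: the asymptotic risk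
`m̃(h₁,h₂) = (ν!)⁻² κ_ν² (a₁₁h₁^{2ν} + 2a₁₂h₁^ν h₂^ν + a₂₂h₂^{2ν}) + c b ‖K‖₂²/(n h₁ h₂)`
is uniquely minimized over the open positive quadrant by the explicit pair
`(h_opt,1, h_opt,2)`. -/
theorem statement8
    (ν : ℕ) (hν : 2 ≤ ν) (n : ℕ) (hn : 1 ≤ n)
    (c b K2 κν : ℝ) (hc : 0 < c) (hb : 0 < b) (hK2 : 0 < K2) (hκν : 0 < κν)
    (a11 a12 a22 : ℝ) (ha11 : 0 < a11) (ha22 : 0 < a22)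
    (hpsd : ∀ u1 u2 : ℝ, 0 ≤ a11 * u1 ^ 2 + 2 * a12 * u1 * u2 + a22 * u2 ^ 2)
    (hcoer : ∃ c₀ > (0 : ℝ), ∀ u1 u2 : ℝ, 0 ≤ u1 → 0 ≤ u2 →
      c₀ * (u1 ^ 2 + u2 ^ 2) ≤ a11 * u1 ^ 2 + 2 * a12 * u1 * u2 + a22 * u2 ^ 2) :
    IsMinOn
      (fun h : ℝ × ℝ =>
        ((Nat.factorial ν : ℝ) ^ 2)⁻¹ * κν ^ 2 *
            (a11 * h.1 ^ (2 * ν) + 2 * a12 * h.1 ^ ν * h.2 ^ ν + a22 * h.2 ^ (2 * ν)) +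
          c * b * K2 / ((n : ℝ) * h.1 * h.2))
      {h : ℝ × ℝ | 0 < h.1 ∧ 0 < h.2}
      ((c * (Nat.factorial ν : ℝ) ^ 2 * b * K2 * a22 ^ (((ν : ℝ) + 1) / (2 * ν)) /
          (2 * n * ν * κν ^ 2 * a11 ^ (((ν : ℝ) + 1) / (2 * ν)) *
            (a11 ^ ((1 : ℝ) / 2) * a22 ^ ((1 : ℝ) / 2) + a12))) ^ ((1 : ℝ) / (2 * ν + 2)),
        (a11 / a22) ^ ((1 : ℝ) / (2 * ν)) *
          (c * (Nat.factorial ν : ℝ) ^ 2 * b * K2 * a22 ^ (((ν : ℝ) + 1) / (2 * ν)) /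
            (2 * n * ν * κν ^ 2 * a11 ^ (((ν : ℝ) + 1) / (2 * ν)) *
              (a11 ^ ((1 : ℝ) / 2) * a22 ^ ((1 : ℝ) / 2) + a12))) ^ ((1 : ℝ) / (2 * ν + 2))) ∧
    ∀ h ∈ {h : ℝ × ℝ | 0 < h.1 ∧ 0 < h.2},
      IsMinOn
        (fun h : ℝ × ℝ =>
          ((Nat.factorial ν : ℝ) ^ 2)⁻¹ * κν ^ 2 *
              (a11 * h.1 ^ (2 * ν) + 2 * a12 * h.1 ^ ν * h.2 ^ ν + a22 * h.2 ^ (2 * ν)) +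
            c * b * K2 / ((n : ℝ) * h.1 * h.2))
        {h : ℝ × ℝ | 0 < h.1 ∧ 0 < h.2} h →
      h = ((c * (Nat.factorial ν : ℝ) ^ 2 * b * K2 * a22 ^ (((ν : ℝ) + 1) / (2 * ν)) /
          (2 * n * ν * κν ^ 2 * a11 ^ (((ν : ℝ) + 1) / (2 * ν)) *
            (a11 ^ ((1 : ℝ) / 2) * a22 ^ ((1 : ℝ) / 2) + a12))) ^ ((1 : ℝ) / (2 * ν + 2)),
        (a11 / a22) ^ ((1 : ℝ) / (2 * ν)) *
          (c * (Nat.factorial ν : ℝ) ^ 2 * b * K2 * a22 ^ (((ν : ℝ) + 1) / (2 * ν)) /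
            (2 * n * ν * κν ^ 2 * a11 ^ (((ν : ℝ) + 1) / (2 * ν)) *
              (a11 ^ ((1 : ℝ) / 2) * a22 ^ ((1 : ℝ) / 2) + a12))) ^ ((1 : ℝ) / (2 * ν + 2))) :=
  statement8_general ν hν n hn c b K2 κν hc hb hK2 hκν a11 a12 a22 ha11 ha22 hcoer
end

section
/- Let ν ≥ 2, a > 0, and let M be a real symmetric d×d matrix that is positive semi-definite for d ≥ 2 with inf{uᵀMu/‖u‖² : u in the closed nonnegative orthant, u≠0} > 0 (for d = 1, M > 0). Then Q(u; M, a, ν) = (ν!)^{-2} uᵀMu + a(u_1⋯u_d)^{−1/ν} is a strictly convex function of u on the open positive orthant, Q(u; M, a, ν) → ∞ both as ‖u‖ → ∞ and as ‖u‖ → 0 within the positive orthant, and Q(·; M, a, ν) attains a unique minimizer in the open positive orthant. -/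
open Finset
open scoped BigOperators

noncomputable section

/-- `Q(u; M, a, ν) = (ν!)⁻² uᵀMu + a (u₁⋯u_d)^{-1/ν}`. -/
def Qfun (d : ℕ) (M : Fin d → Fin d → ℝ) (a : ℝ) (ν : ℕ) (u : Fin d → ℝ) : ℝ :=
  ((Nat.factorial ν : ℝ) ^ 2)⁻¹ * (∑ k, ∑ l, u k * u l * M k l) +
    a * (∏ j, u j) ^ (-(1 : ℝ) / ν)

/-- The open positive orthant. -/
def posOrthant (d : ℕ) : Set (Fin d → ℝ) := {u | ∀ j, 0 < u j}

/-! The quadratic part of `Q` is convex because `M` is positive semidefinite, and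
`(∏ uⱼ) ^ (-1/ν) = exp (-(1/ν) ∑ log uⱼ)` is strictly convex because `log` is strictly concave.
Coercivity of `M` on the orthant gives `Q u ≥ k ‖u‖²`, while `∏ uⱼ ≤ ‖u‖ ^ d` makes the second
term blow up as `u → 0`. For a minimizer, note that the second term alone exceeds `Q 1` once
`∏ uⱼ` is small, so the sublevel set `{Q ≤ Q 1}` lies in the compact set
`{‖u‖ ≤ R, u ≥ 0, ∏ uⱼ ≥ p}` inside the open orthant; uniqueness is strict convexity. -/

theorem convex_setOf_forall_pos {ι : Type*} : Convex ℝ {u : ι → ℝ | ∀ j, 0 < u j} :=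
  fun _ hx _ hy _ _ ha hb hab j => convex_Ioi (0 : ℝ) (hx j) (hy j) ha hb hab

section General

variable {ι : Type*} [Fintype ι]

theorem convexOn_quadratic_sum {M : ι → ι → ℝ}
    (hM : ∀ u : ι → ℝ, 0 ≤ ∑ k, ∑ l, u k * u l * M k l) :
    ConvexOn ℝ Set.univ fun u : ι → ℝ => ∑ k, ∑ l, u k * u l * M k l := by
  refine ⟨convex_univ, fun x _ y _ t s ht hs hts => ?_⟩
  -- the convexity defect of the form `q` is `t s q (x - y) ≥ 0`
  have key : (∑ k, ∑ l, (t • x + s • y) k * (t • x + s • y) l * M k l) +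
      t * s * ∑ k, ∑ l, (x - y) k * (x - y) l * M k l =
      (t + s) * (t * ∑ k, ∑ l, x k * x l * M k l + s * ∑ k, ∑ l, y k * y l * M k l) := by
    simp only [Pi.add_apply, Pi.sub_apply, Pi.smul_apply, smul_eq_mul, Finset.mul_sum,
      ← Finset.sum_add_distrib]
    exact Finset.sum_congr rfl fun k _ => Finset.sum_congr rfl fun l _ => by ring
  rw [hts, one_mul] at key
  simp only [smul_eq_mul]
  nlinarith [mul_nonneg (mul_nonneg ht hs) (hM (x - y))]

theorem strictConvexOn_sum_mul_log {c : ℝ} (hc : c < 0) :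
    StrictConvexOn ℝ {u : ι → ℝ | ∀ j, 0 < u j} fun u => ∑ j, c * Real.log (u j) := by
  refine ⟨convex_setOf_forall_pos, fun x hx y hy hxy t s ht hs hts => ?_⟩
  obtain ⟨j₀, hj₀⟩ := Function.ne_iff.mp hxy
  simp only [Pi.add_apply, Pi.smul_apply, smul_eq_mul, Finset.mul_sum, ← Finset.sum_add_distrib]
  refine Finset.sum_lt_sum (fun j _ => ?_) ⟨j₀, Finset.mem_univ _, ?_⟩
  · have h := strictConcaveOn_log_Ioi.concaveOn.2 (hx j) (hy j) ht.le hs.le hts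
    simp only [smul_eq_mul] at h
    nlinarith
  · have h := strictConcaveOn_log_Ioi.2 (hx j₀) (hy j₀) hj₀ ht hs hts
    simp only [smul_eq_mul] at h
    nlinarith

theorem StrictConvexOn.exp {E : Type*} [AddCommMonoid E] [Module ℝ E] {s : Set E} {f : E → ℝ}
    (hf : StrictConvexOn ℝ s f) : StrictConvexOn ℝ s fun x => Real.exp (f x) :=
  ⟨hf.1, fun x hx y hy hxy t s ht hs hts =>
    calc Real.exp (f (t • x + s • y)) < Real.exp (t • f x + s • f y) :=
          Real.exp_lt_exp.mpr (hf.2 hx hy hxy ht hs hts)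
      _ ≤ t • Real.exp (f x) + s • Real.exp (f y) :=
          convexOn_exp.2 (Set.mem_univ _) (Set.mem_univ _) ht.le hs.le hts⟩

theorem StrictConvexOn.const_mul {E : Type*} [AddCommMonoid E] [Module ℝ E] {s : Set E}
    {f : E → ℝ} {c : ℝ} (hc : 0 < c) (hf : StrictConvexOn ℝ s f) :
    StrictConvexOn ℝ s fun x => c * f x :=
  ⟨hf.1, fun x hx y hy hxy t s ht hs hts => by
    have h := mul_lt_mul_of_pos_left (hf.2 hx hy hxy ht hs hts) hc
    simp only [smul_eq_mul] at h ⊢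
    linarith⟩

theorem strictConvexOn_prod_rpow {c : ℝ} (hc : c < 0) :
    StrictConvexOn ℝ {u : ι → ℝ | ∀ j, 0 < u j} fun u => (∏ j, u j) ^ c := by
  refine (strictConvexOn_sum_mul_log hc).exp.congr fun u hu => ?_
  rw [Real.rpow_def_of_pos (Finset.prod_pos fun j _ => hu j),
    Real.log_prod fun j _ => (hu j).ne', Finset.sum_mul]
  simp only [mul_comm]

theorem norm_sq_le_sum_sq (u : ι → ℝ) : ‖u‖ ^ 2 ≤ ∑ i, u i ^ 2 := by
  have hsum : 0 ≤ ∑ i, u i ^ 2 := Finset.sum_nonneg fun i _ => sq_nonneg (u i)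
  have h : ‖u‖ ≤ √(∑ i, u i ^ 2) := (pi_norm_le_iff_of_nonneg (Real.sqrt_nonneg _)).2 fun i =>
    Real.abs_le_sqrt (Finset.single_le_sum (fun i _ => sq_nonneg (u i)) (Finset.mem_univ i))
  calc ‖u‖ ^ 2 ≤ √(∑ i, u i ^ 2) ^ 2 := pow_le_pow_left₀ (norm_nonneg u) h 2
    _ = ∑ i, u i ^ 2 := Real.sq_sqrt hsum

theorem prod_le_norm_pow {u : ι → ℝ} (hu : ∀ j, 0 ≤ u j) :
    ∏ j, u j ≤ ‖u‖ ^ Fintype.card ι :=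
  calc ∏ j, u j ≤ ∏ _j : ι, ‖u‖ :=
        Finset.prod_le_prod (fun j _ => hu j) fun j _ => (le_abs_self _).trans (norm_le_pi_norm u j)
    _ = ‖u‖ ^ Fintype.card ι := by rw [Finset.prod_const, Finset.card_univ]

end General

theorem exists_forall_le_of_mul_sq_norm_le {E : Type*} [SeminormedAddCommGroup E] {s : Set E}
    {f : E → ℝ} {k : ℝ} (hk : 0 < k) (hf : ∀ u ∈ s, k * ‖u‖ ^ 2 ≤ f u) (C : ℝ) :
    ∃ R, ∀ u ∈ s, R ≤ ‖u‖ → C ≤ f u := by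
  refine ⟨max 1 (|C| / k), fun u hu hR => ?_⟩
  have h1 : 1 ≤ ‖u‖ := (le_max_left _ _).trans hR
  have h2 : |C| ≤ k * ‖u‖ := (div_le_iff₀' hk).mp ((le_max_right _ _).trans hR)
  calc C ≤ |C| := le_abs_self C
    _ ≤ k * ‖u‖ := h2
    _ ≤ k * ‖u‖ ^ 2 := by gcongr; nlinarith
    _ ≤ f u := hf u hu

theorem exists_pos_forall_le_mul_rpow {a c : ℝ} (ha : 0 < a) (hc : c < 0) (C : ℝ) :
    ∃ r > 0, ∀ x, 0 < x → x ≤ r → C ≤ a * x ^ c := by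
  have h := ((tendsto_rpow_neg_nhdsGT_zero hc).const_mul_atTop ha).eventually_ge_atTop C
  obtain ⟨r, hr, hsub⟩ := mem_nhdsGT_iff_exists_Ioc_subset.mp h
  exact ⟨r, hr, fun x hx hxr => hsub ⟨hx, hxr⟩⟩

theorem IsCompact.exists_isMinOn_of_sublevel_subset {α : Type*} [TopologicalSpace α]
    {s K : Set α} {f : α → ℝ} {x₀ : α} (hK : IsCompact K) (hf : ContinuousOn f K)
    (hx₀ : x₀ ∈ s) (hsub : ∀ x ∈ s, f x ≤ f x₀ → x ∈ K) : ∃ x ∈ K, IsMinOn f s x := by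
  obtain ⟨x, hxK, hmin⟩ := hK.exists_isMinOn ⟨x₀, hsub x₀ hx₀ le_rfl⟩ hf
  refine ⟨x, hxK, fun y hy => ?_⟩
  rcases le_or_gt (f y) (f x₀) with hy₀ | hy₀
  · exact hmin (hsub y hy hy₀)
  · exact (hmin (hsub x₀ hx₀ le_rfl)).trans hy₀.le

namespace Qfun

variable {d : ℕ} {M : Fin d → Fin d → ℝ} {a : ℝ} {ν : ℕ}

theorem exponent_neg (hν : ν ≠ 0) : -(1 : ℝ) / ν < 0 :=
  div_neg_of_neg_of_pos (by norm_num) (by positivity)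

theorem strictConvexOn (ha : 0 < a) (hν : ν ≠ 0)
    (hM : ∀ u : Fin d → ℝ, 0 ≤ ∑ k, ∑ l, u k * u l * M k l) :
    StrictConvexOn ℝ (posOrthant d) (Qfun d M a ν) :=
  (((convexOn_quadratic_sum hM).subset (Set.subset_univ _) convex_setOf_forall_pos).smul
    (by positivity : (0 : ℝ) ≤ ((ν.factorial : ℝ) ^ 2)⁻¹)).add_strictConvexOn
    ((strictConvexOn_prod_rpow (exponent_neg hν)).const_mul ha)

theorem continuousOn : ContinuousOn (Qfun d M a ν) (posOrthant d) := fun u hu => by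
  have hprod : ∏ j, u j ≠ 0 := (Finset.prod_pos fun j _ => hu j).ne'
  refine ContinuousAt.continuousWithinAt ?_
  unfold Qfun
  fun_prop (disch := exact Or.inl hprod)

theorem mul_rpow_le (hM : ∀ u : Fin d → ℝ, 0 ≤ ∑ k, ∑ l, u k * u l * M k l) (u : Fin d → ℝ) :
    a * (∏ j, u j) ^ (-(1 : ℝ) / ν) ≤ Qfun d M a ν u :=
  le_add_of_nonneg_left (mul_nonneg (by positivity) (hM u))

theorem mul_sq_norm_le {c₀ : ℝ} (ha : 0 ≤ a) (hc₀ : 0 ≤ c₀)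
    (hcoer : ∀ u : Fin d → ℝ, (∀ i, 0 ≤ u i) → c₀ * (∑ i, u i ^ 2) ≤ ∑ k, ∑ l, u k * u l * M k l)
    {u : Fin d → ℝ} (hu : u ∈ posOrthant d) :
    ((ν.factorial : ℝ) ^ 2)⁻¹ * c₀ * ‖u‖ ^ 2 ≤ Qfun d M a ν u := by
  have hrpow : 0 ≤ a * (∏ j, u j) ^ (-(1 : ℝ) / ν) :=
    mul_nonneg ha (Real.rpow_nonneg (Finset.prod_nonneg fun j _ => (hu j).le) _)
  calc ((ν.factorial : ℝ) ^ 2)⁻¹ * c₀ * ‖u‖ ^ 2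
      ≤ ((ν.factorial : ℝ) ^ 2)⁻¹ * (c₀ * ∑ i, u i ^ 2) := by
        rw [mul_assoc]; gcongr; exact norm_sq_le_sum_sq u
    _ ≤ ((ν.factorial : ℝ) ^ 2)⁻¹ * ∑ k, ∑ l, u k * u l * M k l := by
        gcongr; exact hcoer u fun i => (hu i).le
    _ ≤ Qfun d M a ν u := le_add_of_nonneg_right hrpow

theorem exists_forall_le_of_norm_le (hd : d ≠ 0) (ha : 0 < a) (hν : ν ≠ 0)
    (hM : ∀ u : Fin d → ℝ, 0 ≤ ∑ k, ∑ l, u k * u l * M k l) (C : ℝ) :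
    ∃ r > 0, ∀ u ∈ posOrthant d, ‖u‖ ≤ r → C ≤ Qfun d M a ν u := by
  obtain ⟨r, hr, hC⟩ := exists_pos_forall_le_mul_rpow ha (exponent_neg hν) C
  refine ⟨min 1 r, lt_min one_pos hr, fun u hu hur => ?_⟩
  have hprod : ∏ j, u j ≤ r :=
    calc ∏ j, u j ≤ ‖u‖ ^ d := by simpa using prod_le_norm_pow fun j => (hu j).le
      _ ≤ ‖u‖ := pow_le_of_le_one (norm_nonneg u) (hur.trans (min_le_left _ _)) hd
      _ ≤ r := hur.trans (min_le_right _ _)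
  exact (hC _ (Finset.prod_pos fun j _ => hu j) hprod).trans (mul_rpow_le hM u)

theorem exists_isMinOn (ha : 0 < a) (hν : ν ≠ 0)
    (hM : ∀ u : Fin d → ℝ, 0 ≤ ∑ k, ∑ l, u k * u l * M k l)
    (hcoer : ∀ C : ℝ, ∃ R : ℝ, ∀ u ∈ posOrthant d, R ≤ ‖u‖ → C ≤ Qfun d M a ν u) :
    ∃ u₀ ∈ posOrthant d, IsMinOn (Qfun d M a ν) (posOrthant d) u₀ := by
  set C := Qfun d M a ν 1 + 1
  obtain ⟨R, hR⟩ := hcoer C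
  obtain ⟨p, hp, hpC⟩ := exists_pos_forall_le_mul_rpow ha (exponent_neg hν) C
  set K := Metric.closedBall 0 R ∩ {u : Fin d → ℝ | (∀ j, 0 ≤ u j) ∧ p ≤ ∏ j, u j}
  have hK : IsCompact K := by
    refine (isCompact_closedBall 0 R).inter_right (IsClosed.inter ?_
      (isClosed_le continuous_const (by fun_prop : Continuous fun u : Fin d → ℝ => ∏ j, u j)))
    show IsClosed {u : Fin d → ℝ | ∀ j, 0 ≤ u j}
    rw [Set.ofPred_forall]
    exact isClosed_iInter fun j => isClosed_le continuous_const (continuous_apply j)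
  have hKs : K ⊆ posOrthant d := fun u ⟨_, hnonneg, hprod⟩ j =>
    (hnonneg j).lt_of_ne' fun hj =>
      hp.not_ge (hprod.trans_eq (Finset.prod_eq_zero (Finset.mem_univ j) hj))
  have hsub : ∀ u ∈ posOrthant d, Qfun d M a ν u ≤ Qfun d M a ν 1 → u ∈ K := by
    intro u hu hQu
    refine ⟨mem_closedBall_zero_iff.mpr (le_of_not_ge fun hRu => ?_), fun j => (hu j).le,
      le_of_not_ge fun hup => ?_⟩
    · linarith [hR u hu hRu]
    · linarith [hpC _ (Finset.prod_pos fun j _ => hu j) hup, mul_rpow_le (a := a) (ν := ν) hM u]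
  have hone : (1 : Fin d → ℝ) ∈ posOrthant d := fun _ => one_pos
  obtain ⟨u₀, hu₀, hmin⟩ := hK.exists_isMinOn_of_sublevel_subset (continuousOn.mono hKs) hone hsub
  exact ⟨u₀, hKs hu₀, hmin⟩

end Qfun

theorem statement13_general (d : ℕ) (hd : 1 ≤ d) (ν : ℕ) (hν : 2 ≤ ν) (a : ℝ) (ha : 0 < a)
    (M : Fin d → Fin d → ℝ)
    (hMpsd : ∀ u : Fin d → ℝ, 0 ≤ ∑ k, ∑ l, u k * u l * M k l)
    (hMcoer : ∃ c₀ > (0 : ℝ), ∀ u : Fin d → ℝ, (∀ i, 0 ≤ u i) →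
      c₀ * (∑ i, u i ^ 2) ≤ ∑ k, ∑ l, u k * u l * M k l) :
    StrictConvexOn ℝ (posOrthant d) (Qfun d M a ν) ∧
    (∀ C : ℝ, ∃ R : ℝ, ∀ u ∈ posOrthant d, R ≤ ‖u‖ → C ≤ Qfun d M a ν u) ∧
    (∀ C : ℝ, ∃ r > (0 : ℝ), ∀ u ∈ posOrthant d, ‖u‖ ≤ r → C ≤ Qfun d M a ν u) ∧
    (∃! u₀ : Fin d → ℝ, u₀ ∈ posOrthant d ∧ IsMinOn (Qfun d M a ν) (posOrthant d) u₀) := by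
  have hν0 : ν ≠ 0 := by omega
  obtain ⟨c₀, hc₀, hcoer⟩ := hMcoer
  have hconvex := Qfun.strictConvexOn ha hν0 hMpsd
  have hinfty : ∀ C : ℝ, ∃ R : ℝ, ∀ u ∈ posOrthant d, R ≤ ‖u‖ → C ≤ Qfun d M a ν u :=
    exists_forall_le_of_mul_sq_norm_le (by positivity)
      fun u hu => Qfun.mul_sq_norm_le ha.le hc₀.le hcoer hu
  obtain ⟨u₀, hu₀, hmin⟩ := Qfun.exists_isMinOn ha hν0 hMpsd hinfty
  refine ⟨hconvex, hinfty, Qfun.exists_forall_le_of_norm_le (by omega) ha hν0 hMpsd, u₀,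
    ⟨hu₀, hmin⟩, fun v ⟨hv, hvmin⟩ => hconvex.eq_of_isMinOn hvmin hmin hv hu₀⟩

/-- for `ν ≥ 2`, `a > 0` and `M` symmetric positive semi-definite with
quadratic form coercive on the closed nonnegative orthant, `Q(·; M, a, ν)` is strictly convex
on the open positive orthant, blows up as `‖u‖ → ∞` and as `‖u‖ → 0` within the orthant, and
attains a unique minimizer there. -/
theorem statement13 (d : ℕ) (hd : 1 ≤ d) (ν : ℕ) (hν : 2 ≤ ν) (a : ℝ) (ha : 0 < a)
    (M : Fin d → Fin d → ℝ) (hMsymm : ∀ k l, M k l = M l k)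
    (hMpsd : ∀ u : Fin d → ℝ, 0 ≤ ∑ k, ∑ l, u k * u l * M k l)
    (hMcoer : ∃ c₀ > (0 : ℝ), ∀ u : Fin d → ℝ, (∀ i, 0 ≤ u i) →
      c₀ * (∑ i, u i ^ 2) ≤ ∑ k, ∑ l, u k * u l * M k l) :
    StrictConvexOn ℝ (posOrthant d) (Qfun d M a ν) ∧
    (∀ C : ℝ, ∃ R : ℝ, ∀ u ∈ posOrthant d, R ≤ ‖u‖ → C ≤ Qfun d M a ν u) ∧
    (∀ C : ℝ, ∃ r > (0 : ℝ), ∀ u ∈ posOrthant d, ‖u‖ ≤ r → C ≤ Qfun d M a ν u) ∧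
    (∃! u₀ : Fin d → ℝ, u₀ ∈ posOrthant d ∧ IsMinOn (Qfun d M a ν) (posOrthant d) u₀) :=
  statement13_general d hd ν hν a ha M hMpsd hMcoer
end
end
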